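/- arXiv:1606.06787 — 2 statements merged into one kernel-verified Lean document; each statement's English description precedes it below -/
import Mathlib

section
/- For all nonnegative real numbers a, b and every real p > 1, one has (a - b)(a^p - b^p) ≥ (4p/(p+1)²) (a^{(p+1)/2} - b^{(p+1)/2})². -/
/-!
With `q = (p + 1) / 2` and `g t = t ^ ((p - 1) / 2)`, one has `a ^ q - b ^ q = q ∫_b^a g` and
`a ^ p - b ^ p = p ∫_b^a g ^ 2`, so the inequality is the Cauchy–Schwarz inequality
`(∫_b^a g) ^ 2 ≤ (a - b) ∫_b^a g ^ 2` multiplied by `p / q ^ 2 = 4 p / (p + 1) ^ 2`.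
-/

open Real Set intervalIntegral
open MeasureTheory (volume)
open scoped Interval

theorem sq_integral_le_mul_integral_sq {a b : ℝ} {g : ℝ → ℝ}
    (hg : IntervalIntegrable g volume a b)
    (hg2 : IntervalIntegrable (fun x => g x ^ 2) volume a b) :
    (∫ x in a..b, g x) ^ 2 ≤ (b - a) * ∫ x in a..b, g x ^ 2 := by
  wlog hab : a ≤ b generalizing a b
  · have h := this hg.symm hg2.symm (le_of_not_ge hab)
    rw [integral_symm a b, integral_symm a b, neg_sq] at h
    linarith
  have hquad (c : ℝ) :
      0 ≤ (b - a) * (c * c) + (-2 * ∫ x in a..b, g x) * c + ∫ x in a..b, g x ^ 2 := by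
    have h2c : IntervalIntegrable (fun x => 2 * c * g x) volume a b := hg.const_mul _
    have hexpand : ∫ x in a..b, (g x - c) ^ 2 =
        (∫ x in a..b, g x ^ 2) - 2 * c * (∫ x in a..b, g x) + (b - a) * c ^ 2 := by
      rw [← integral_const_mul, ← integral_sub hg2 h2c, ← smul_eq_mul (b - a), ← integral_const,
        ← integral_add (hg2.sub h2c) intervalIntegrable_const]
      congr 1 with x
      ring
    linarith [integral_nonneg (μ := volume) hab fun x _ => sq_nonneg (g x - c)]
  have := discrim_le_zero hquad
  rw [discrim] at this
  linarith

theorem eqOn_sq_rpow_div_two {a b : ℝ} (ha : 0 ≤ a) (hb : 0 ≤ b) (r : ℝ) :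
    EqOn (fun x : ℝ => (x ^ (r / 2)) ^ 2) (fun x => x ^ r) [[a, b]] := fun x hx => by
  have hx0 : 0 ≤ x := (le_min ha hb).trans hx.1
  simp only [← rpow_two, ← rpow_mul hx0, div_mul_cancel₀ r two_ne_zero]

theorem integral_rpow_sub_one_div_two {a b p : ℝ} (hp : -1 < p) :
    ∫ x in a..b, x ^ ((p - 1) / 2) = (b ^ ((p + 1) / 2) - a ^ ((p + 1) / 2)) / ((p + 1) / 2) := by
  rw [integral_rpow (Or.inl (by linarith))]
  ring_nf

theorem integral_sq_rpow_sub_one_div_two {a b p : ℝ} (ha : 0 ≤ a) (hb : 0 ≤ b) (hp : 0 < p) :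
    ∫ x in a..b, (x ^ ((p - 1) / 2)) ^ 2 = (b ^ p - a ^ p) / p := by
  rw [integral_congr (eqOn_sq_rpow_div_two ha hb _), integral_rpow (Or.inl (by linarith)),
    sub_add_cancel]

theorem stmt2 (a b p : ℝ) (ha : 0 ≤ a) (hb : 0 ≤ b) (hp : 1 < p) :
    (4 * p / (p + 1) ^ 2) * (a ^ ((p + 1) / 2) - b ^ ((p + 1) / 2)) ^ 2 ≤
      (a - b) * (a ^ p - b ^ p) := by
  have hp0 : 0 < p := by linarith
  have hcs := sq_integral_le_mul_integral_sq (a := b) (b := a)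
    (g := fun x => x ^ ((p - 1) / 2)) (intervalIntegrable_rpow' (by linarith))
    ((intervalIntegrable_rpow' (r := p - 1) (by linarith)).congr
      ((eqOn_sq_rpow_div_two hb ha _).symm.mono uIoc_subset_uIcc))
  rw [integral_rpow_sub_one_div_two (by linarith),
    integral_sq_rpow_sub_one_div_two hb ha hp0] at hcs
  calc (4 * p / (p + 1) ^ 2) * (a ^ ((p + 1) / 2) - b ^ ((p + 1) / 2)) ^ 2
      = p * ((a ^ ((p + 1) / 2) - b ^ ((p + 1) / 2)) / ((p + 1) / 2)) ^ 2 := by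
        field_simp; ring
    _ ≤ p * ((a - b) * ((a ^ p - b ^ p) / p)) := by gcongr
    _ = (a - b) * (a ^ p - b ^ p) := by field_simp
end

section
/- Let τ > 0, C > 0, β > 1, and let (a_k) be a sequence of nonnegative reals satisfying a_k - a_{k-1} ≤ -τ C a_k^β for all k ≥ 1. Then for every k ≥ 1, a_k ≤ min{a_0, (C(β-1)kτ)^{-1/(β-1)}} + (τ/√2) C a_0^β. -/
/-!
Let `b(t) = (C (β - 1) t) ^ (-1 / (β - 1))` be the solution of `b' = -C b ^ β` coming down
from `+∞`, and `E = τ C a₀ ^ β / √2`. By induction, `a_{k-1} ≤ W + E` with `W = min a₀ b((k-1)τ)`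
(`W = a₀` for `k = 1`). Since `y ↦ y + τ C y ^ β` is increasing, `a_k ≤ b(kτ) + E` follows once
the implicit Euler step ending at `b(kτ) + E` starts above `W + E`, i.e.
`W - b(kτ) ≤ τ C (b(kτ) + E) ^ β`. Writing `b(kτ) = W (1 - δ)`, a second-order expansion of
`(1 - δ) ^ (-(β - 1))` gives `W - b(kτ) ≤ τ C W ^ β / (1 + β δ / 2)`, and Bernoulli's inequality
for `(b(kτ) + E) ^ β` closes the gap, using `W ≤ a₀` to compare `δ` with `E`.
-/

open Real

lemma add_sq_div_two_le_neg_log_one_sub {x : ℝ} (hx₀ : 0 ≤ x) (hx₁ : x < 1) :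
    x + x ^ 2 / 2 ≤ -log (1 - x) := by
  have hsum := hasSum_pow_div_log_of_abs_lt_one (abs_lt.2 ⟨by linarith, hx₁⟩)
  have := sum_le_hasSum (Finset.range 2) (fun n _ => by positivity) hsum
  norm_num [Finset.sum_range_succ] at this
  linarith

lemma one_add_mul_add_le_one_sub_rpow_neg {α δ : ℝ} (hα : 0 ≤ α) (hδ₀ : 0 ≤ δ) (hδ₁ : δ < 1) :
    1 + α * δ + α * (α + 1) * δ ^ 2 / 2 ≤ (1 - δ) ^ (-α) := by
  set L := -log (1 - δ)
  have hδL : δ + δ ^ 2 / 2 ≤ L := add_sq_div_two_le_neg_log_one_sub hδ₀ hδ₁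
  have hL : 0 ≤ L := by nlinarith
  calc 1 + α * δ + α * (α + 1) * δ ^ 2 / 2 = 1 + α * (δ + δ ^ 2 / 2) + (α * δ) ^ 2 / 2 := by ring
    _ ≤ 1 + α * L + (α * L) ^ 2 / 2 := by gcongr; nlinarith
    _ ≤ exp (α * L) := quadratic_le_exp_of_nonneg (by positivity)
    _ = (1 - δ) ^ (-α) := by rw [rpow_def_of_pos (by linarith), mul_comm, mul_neg, neg_mul]

lemma rpow_neg_sub_one_mul_rpow {y : ℝ} (hy : 0 < y) (β : ℝ) : y ^ (-(β - 1)) * y ^ β = y := by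
  rw [← rpow_add hy]; norm_num

lemma rpow_neg_mul_le_of_rpow_neg_sub_le {β c x w : ℝ} (hβ : 1 < β) (hx : 0 < x) (hxw : x ≤ w)
    (h : x ^ (-(β - 1)) - w ^ (-(β - 1)) ≤ c * (β - 1)) :
    w ^ (-(β - 1)) * ((w - x) / w * (1 + β * ((w - x) / w) / 2)) ≤ c := by
  have hw : 0 < w := hx.trans_le hxw
  set δ := (w - x) / w with hδ
  have hδ₀ : 0 ≤ δ := div_nonneg (by linarith) hw.le
  have hδ₁ : δ < 1 := by rw [div_lt_one hw]; linarith
  have hT := one_add_mul_add_le_one_sub_rpow_neg (by linarith : 0 ≤ β - 1) hδ₀ hδ₁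
  have hxδ : x ^ (-(β - 1)) = w ^ (-(β - 1)) * (1 - δ) ^ (-(β - 1)) := by
    rw [← mul_rpow hw.le (by linarith)]; congr 1; rw [hδ]; field_simp; ring
  refine le_of_mul_le_mul_right ?_ (by linarith : 0 < β - 1)
  calc w ^ (-(β - 1)) * (δ * (1 + β * δ / 2)) * (β - 1)
      = w ^ (-(β - 1)) * ((β - 1) * δ + (β - 1) * (β - 1 + 1) * δ ^ 2 / 2) := by ring
    _ ≤ w ^ (-(β - 1)) * ((1 - δ) ^ (-(β - 1)) - 1) := by gcongr; linarith
    _ ≤ c * (β - 1) := by linarith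

lemma one_le_one_add_mul_one_sub_rpow {β δ θ : ℝ} (hβ : 1 ≤ β) (hδ : 0 ≤ δ) (hθ₁ : θ ≤ 1)
    (hθ : θ ≤ δ - δ * (1 + β * δ / 2) / √2) :
    1 ≤ (1 + β * δ / 2) * (1 - θ) ^ β := by
  set v := 1 + β * δ / 2 with hv_def
  have hv : 1 ≤ v := by have := mul_nonneg (by linarith : (0 : ℝ) ≤ β) hδ; linarith
  have hbern : 1 - β * θ ≤ (1 - θ) ^ β := by
    simpa [sub_eq_add_neg] using one_add_mul_self_le_rpow_one_add (by linarith : -1 ≤ -θ) hβ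
  have hq : 0 ≤ √2 * v ^ 2 - 2 * v + 1 := by
    nlinarith [mul_le_mul_of_nonneg_right one_lt_sqrt_two.le (sq_nonneg v), sq_nonneg (v - 1)]
  have hcubic : v * (1 - β * δ + β * δ * v / √2) - 1 = β * δ / 2 * (√2 * v ^ 2 - 2 * v + 1) := by
    have h2 : √2 ^ 2 = 2 := sq_sqrt (by norm_num)
    field_simp
    ring_nf
    rw [h2]; ring
  calc 1 ≤ v * (1 - β * δ + β * δ * v / √2) := by
        nlinarith [mul_nonneg (by positivity : 0 ≤ β * δ) hq]
    _ ≤ v * (1 - β * θ) := by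
        have := mul_le_mul_of_nonneg_left hθ (by linarith : (0 : ℝ) ≤ β)
        gcongr
        linarith [show β * (δ - δ * v / √2) = β * δ - β * δ * v / √2 by ring]
    _ ≤ v * (1 - θ) ^ β := by gcongr

/-- If `x` lies above the value at time `c` of the flow of `b' = -b ^ β` started at `w`, then the
implicit Euler step of length `c` ending at `x + c A ^ β / √2` starts above `w + c A ^ β / √2`. -/
lemma sub_le_mul_add_rpow_of_rpow_neg_sub_le {β c A x w : ℝ} (hβ : 1 < β) (hc : 0 ≤ c)
    (hx : 0 < x) (hxw : x ≤ w) (hwA : w ≤ A)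
    (h : x ^ (-(β - 1)) - w ^ (-(β - 1)) ≤ c * (β - 1)) :
    w - x ≤ c * (x + c * A ^ β / √2) ^ β := by
  have hw : 0 < w := hx.trans_le hxw
  have hA : 0 < A := hw.trans_le hwA
  have hwv := rpow_neg_mul_le_of_rpow_neg_sub_le hβ hx hxw h
  set δ := (w - x) / w with hδ
  set v := 1 + β * δ / 2
  have hwδ : w * δ = w - x := by rw [hδ]; field_simp
  have hAv : A * (δ * v) ≤ c * A ^ β := by
    have hAw : A ^ (-(β - 1)) ≤ w ^ (-(β - 1)) := rpow_le_rpow_of_nonpos hw hwA (by linarith)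
    calc A * (δ * v) = A ^ (-(β - 1)) * (δ * v) * A ^ β := by
          rw [mul_right_comm (A ^ _), rpow_neg_sub_one_mul_rpow hA]
      _ ≤ c * A ^ β := by
          gcongr; exact (mul_le_mul_of_nonneg_right hAw (by positivity)).trans hwv
  set E := c * A ^ β / √2
  have hE₀ : 0 ≤ E := by positivity
  have hθ : 1 - (x + E) / w ≤ δ - δ * v / √2 := by
    have hEA : δ * v / √2 ≤ E / A := by
      rw [le_div_iff₀ hA, div_mul_eq_mul_div, mul_comm]
      exact div_le_div_of_nonneg_right hAv (sqrt_nonneg 2)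
    have hEw : E / A ≤ E / w := div_le_div_of_nonneg_left hE₀ hw hwA
    have : 1 - (x + E) / w = δ - E / w := by rw [hδ]; field_simp; ring
    linarith
  have hvθ := one_le_one_add_mul_one_sub_rpow hβ.le (div_nonneg (by linarith) hw.le)
    (by have := div_nonneg (by linarith : 0 ≤ x + E) hw.le; linarith) hθ
  rw [sub_sub_cancel] at hvθ
  calc w - x ≤ (w - x) * (v * ((x + E) / w) ^ β) := le_mul_of_one_le_right (by linarith) hvθ
    _ = w ^ (-(β - 1)) * (δ * v) * w ^ β * ((x + E) / w) ^ β := by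
        rw [mul_right_comm (w ^ _), rpow_neg_sub_one_mul_rpow hw, ← hwδ]; ring
    _ ≤ c * w ^ β * ((x + E) / w) ^ β := by gcongr
    _ = c * (x + E) ^ β := by
        rw [div_rpow (by positivity) hw.le]; field_simp

lemma le_add_of_add_mul_rpow_le {c β y y' w x E : ℝ} (hc : 0 ≤ c) (hβ : 0 ≤ β) (hxE : 0 ≤ x + E)
    (hy : y + c * y ^ β ≤ y') (hy' : y' ≤ w + E) (hwx : w - x ≤ c * (x + E) ^ β) :
    y ≤ x + E := by
  by_contra! hlt
  have := mul_le_mul_of_nonneg_left (rpow_le_rpow hxE hlt.le hβ) hc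
  linarith

/-- The solution of `b' = -C b ^ β` that starts from `+∞` at `t = 0`. -/
noncomputable def powerDecay (C β t : ℝ) : ℝ := (C * (β - 1) * t) ^ (-(1 / (β - 1)))

lemma powerDecay_pos {C β t : ℝ} (hC : 0 < C) (hβ : 1 < β) (ht : 0 < t) :
    0 < powerDecay C β t :=
  rpow_pos_of_pos (mul_pos (mul_pos hC (sub_pos.2 hβ)) ht) _

lemma powerDecay_rpow_neg {C β t : ℝ} (hC : 0 ≤ C) (hβ : 1 < β) (ht : 0 ≤ t) :
    powerDecay C β t ^ (-(β - 1)) = C * (β - 1) * t := by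
  rw [powerDecay, one_div, neg_inv]
  exact rpow_inv_rpow (mul_nonneg (mul_nonneg hC (sub_pos.2 hβ).le) ht) (by linarith)

lemma le_min_powerDecay_add_of_add_mul_rpow_le {β C τ t A W y y' : ℝ} (hβ : 1 < β) (hC : 0 < C)
    (hτ : 0 < τ) (ht : 0 ≤ t) (hy : 0 ≤ y) (hyy' : y + τ * C * y ^ β ≤ y')
    (hy' : y' ≤ W + τ * C * A ^ β / √2) (hWA : W ≤ A)
    (hW : 0 < W → C * (β - 1) * t ≤ W ^ (-(β - 1))) :
    y ≤ min A (powerDecay C β (t + τ)) + τ * C * A ^ β / √2 := by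
  set x := powerDecay C β (t + τ)
  have hx : 0 < x := powerDecay_pos hC hβ (by linarith)
  have hc : 0 ≤ τ * C := by positivity
  have hyy'' : y ≤ y' := by nlinarith [rpow_nonneg hy β]
  rw [← min_add_add_right]
  refine le_min (by linarith) ?_
  rcases le_or_gt W x with hWx | hxW
  · linarith
  have hA : 0 ≤ A ^ β := rpow_nonneg (hx.trans (hxW.trans_le hWA)).le β
  refine le_add_of_add_mul_rpow_le hc (by linarith) (by positivity) hyy' hy' ?_
  refine sub_le_mul_add_rpow_of_rpow_neg_sub_le hβ hc hx hxW.le hWA ?_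
  rw [powerDecay_rpow_neg hC.le hβ (by linarith)]
  linarith [hW (hx.trans hxW)]

theorem stmt5 (τ C β : ℝ) (hτ : 0 < τ) (hC : 0 < C) (hβ : 1 < β)
    (a : ℕ → ℝ) (ha : ∀ k, 0 ≤ a k)
    (hrec : ∀ k : ℕ, 1 ≤ k → a k - a (k - 1) ≤ -τ * C * a k ^ β) :
    ∀ k : ℕ, 1 ≤ k →
      a k ≤ min (a 0) ((C * (β - 1) * ((k : ℝ) * τ)) ^ (-(1 / (β - 1)))) +
              (τ / Real.sqrt 2) * C * a 0 ^ β := by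
  have hstep : ∀ k, 1 ≤ k → a k + τ * C * a k ^ β ≤ a (k - 1) := fun k hk => by
    linarith [hrec k hk]
  intro k hk
  rw [show τ / √2 * C * a 0 ^ β = τ * C * a 0 ^ β / √2 by ring]
  change a k ≤ min (a 0) (powerDecay C β (k * τ)) + _
  induction k, hk using Nat.le_induction with
  | base =>
    have := le_min_powerDecay_add_of_add_mul_rpow_le hβ hC hτ le_rfl (ha 1) (hstep 1 le_rfl)
      (le_add_of_nonneg_right (by have := rpow_nonneg (ha 0) β; positivity)) le_rfl (fun _ => ?_)
    · simpa using this
    · simpa using rpow_nonneg (ha 0) _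
  | succ j hj ih =>
    have hW : 0 < min (a 0) (powerDecay C β (j * τ)) → C * (β - 1) * (j * τ) ≤
        min (a 0) (powerDecay C β (j * τ)) ^ (-(β - 1)) := fun hW => by
      rw [← powerDecay_rpow_neg hC.le hβ (by positivity)]
      exact rpow_le_rpow_of_nonpos hW (min_le_right _ _) (by linarith)
    have := le_min_powerDecay_add_of_add_mul_rpow_le hβ hC hτ (by positivity) (ha (j + 1))
      (hstep (j + 1) (by omega)) ih (min_le_left _ _) hW
    rwa [show (j : ℝ) * τ + τ = ((j + 1 : ℕ) : ℝ) * τ by push_cast; ring] at this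
end
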